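/- arXiv:2506.04790 — 3 statements merged into one kernel-verified Lean document; each statement's English description precedes it below -/
import Mathlib

section
/- Let (X, d) be a metric space, let S be a finite set of points in X, and let ε > 0. Consider the greedy filtering procedure that repeatedly removes the first remaining element k of S, adds it to the output set K, and deletes from S all elements x with d(k, x)² < ε. Then any two distinct elements i, j of the resulting output set K satisfy d(i, j)² ≥ ε. -/
/-!
The output is a sublist of the input, and each kept element `k` is followed only by elements
that survived the filter at `k`, i.e. lie at squared distance `≥ ε` from it. So the output is
pairwise `ε`-separated, and the relation is symmetric.
-/

open Classical in
/-- Greedy filtering (LotusFilter): pop the first remaining element, keep it, and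
delete all remaining elements whose squared distance to it is `< ε`. -/
noncomputable def greedyFilter {X : Type*} [MetricSpace X] (ε : ℝ) : List X → List X
  | [] => []
  | k :: rest =>
      k :: greedyFilter ε (rest.filter (fun x => !decide (dist k x ^ 2 < ε)))
  termination_by l => l.length
  decreasing_by
    simp only [List.length_cons]
    first
      | exact Nat.lt_succ_of_le (by rw [List.length_unattach]; exact (List.length_filter_le _ _).trans_eq List.length_attach)
      | (simp only [List.length_unattach, List.length_attach]; exact Nat.lt_succ_of_le (List.length_filter_le _ _))

section
variable {X : Type*} [MetricSpace X] (ε : ℝ)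

-- `greedyFilter.induct` phrases the recursive call through `rest.attach`; this removes it.
theorem greedyFilter_induction {motive : List X → Prop} (nil : motive [])
    (cons : ∀ k rest, motive (rest.filter fun x => !decide (dist k x ^ 2 < ε)) →
      motive (k :: rest)) (S : List X) : motive S := by
  induction S using greedyFilter.induct (X := X) ε with
  | case1 => exact nil
  | case2 k rest ih =>
    exact cons k rest <| by
      rwa [List.unattach_filter (hf := fun _ _ => rfl), List.unattach_attach] at ih

theorem greedyFilter_sublist (S : List X) : (greedyFilter ε S).Sublist S := by
  induction S using greedyFilter_induction (X := X) ε with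
  | nil => simp [greedyFilter]
  | cons k rest ih =>
    rw [greedyFilter.eq_2]
    exact (ih.trans List.filter_sublist).cons_cons k

theorem greedyFilter_pairwise (S : List X) :
    (greedyFilter ε S).Pairwise fun i j => ε ≤ dist i j ^ 2 := by
  induction S using greedyFilter_induction (X := X) ε with
  | nil => simp [greedyFilter]
  | cons k rest ih =>
    rw [greedyFilter.eq_2, List.pairwise_cons]
    refine ⟨fun x hx => ?_, ih⟩
    simpa using List.of_mem_filter ((greedyFilter_sublist ε _).subset hx)

end

theorem greedyFilter_separated_general {X : Type*} [MetricSpace X] (ε : ℝ)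
    (S : List X) :
    ∀ i ∈ greedyFilter ε S, ∀ j ∈ greedyFilter ε S, i ≠ j → ε ≤ dist i j ^ 2 :=
  have : Std.Symm fun i j : X => ε ≤ dist i j ^ 2 := ⟨fun i j h => dist_comm i j ▸ h⟩
  fun _ hi _ hj => (greedyFilter_pairwise ε S).forall hi hj

/-- Any two distinct elements of the output of greedy filtering are at squared
distance at least `ε`. -/
theorem greedyFilter_separated {X : Type*} [MetricSpace X] (ε : ℝ) (hε : 0 < ε)
    (S : List X) :
    ∀ i ∈ greedyFilter ε S, ∀ j ∈ greedyFilter ε S, i ≠ j → ε ≤ dist i j ^ 2 :=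
  greedyFilter_separated_general ε S
end

section
/- Greedy max-min selection (GMM) is a 2-approximation for max-min diversification: given a finite set S in a metric space and target size K ≥ 2, the greedy algorithm that starts from any point and repeatedly adds argmax_{j ∈ S∖K} min_{i ∈ K} d(i, j) produces a set whose minimum pairwise distance is at least half the optimal minimum pairwise distance over all K-element subsets of S. -/
/-!
Let `γ` be the minimum pairwise distance of the greedy points `g 0, …, g n` (so `K = n + 1`).
The greedy gaps `d(g t, {g 0, …, g (t-1)})` are nonincreasing in `t`, so the last one is at most every pairwise
distance, hence at most `γ`; since `g n` was the farthest candidate, every point of `S` lies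
within `γ` of one of the `n` centers `g 0, …, g (n-1)`. Any `n + 1` points of `S` therefore
include two sharing a center, and they are at distance at most `2γ`.
-/

section PrefixDist

variable {X : Type*} [PseudoMetricSpace X] {K : ℕ}

/-- Junk value `sInf ∅ = 0` at `t = 0`, hence the hypotheses `0 < t` below. -/
noncomputable def prefixDist (g : Fin K → X) (t : ℕ) (x : X) : ℝ :=
  sInf {r : ℝ | ∃ i : Fin K, (i : ℕ) < t ∧ r = dist (g i) x}

def IsGreedyIn (S : Set X) (g : Fin K → X) : Prop :=
  ∀ t : Fin K, 0 < (t : ℕ) → ∀ j ∈ S, prefixDist g t j ≤ prefixDist g t (g t)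

theorem bddBelow_dist_setOf {P : Fin K → Prop} (g : Fin K → X) (x : X) :
    BddBelow {r : ℝ | ∃ i, P i ∧ r = dist (g i) x} :=
  ⟨0, by rintro _ ⟨i, _, rfl⟩; exact dist_nonneg⟩

theorem prefixDist_le_dist (g : Fin K → X) {t : ℕ} {i : Fin K} (hi : (i : ℕ) < t) (x : X) :
    prefixDist g t x ≤ dist (g i) x :=
  csInf_le (bddBelow_dist_setOf g x) ⟨i, hi, rfl⟩

theorem prefixDist_antitone (g : Fin (K + 1) → X) {s t : ℕ} (hs : 0 < s) (hst : s ≤ t)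
    (x : X) : prefixDist g t x ≤ prefixDist g s x :=
  csInf_le_csInf (bddBelow_dist_setOf g x) ⟨dist (g 0) x, 0, hs, rfl⟩
    fun _ ⟨i, hi, hr⟩ => ⟨i, hi.trans_le hst, hr⟩

theorem exists_dist_eq_prefixDist (g : Fin (K + 1) → X) {t : ℕ} (ht : 0 < t) (x : X) :
    ∃ i : Fin (K + 1), (i : ℕ) < t ∧ dist (g i) x = prefixDist g t x := by
  let A := {r : ℝ | ∃ i : Fin (K + 1), (i : ℕ) < t ∧ r = dist (g i) x}
  have hfin : A.Finite :=
    (Set.finite_range fun i => dist (g i) x).subset fun _ ⟨i, _, hr⟩ => ⟨i, hr.symm⟩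
  obtain ⟨i, hi, hr⟩ : sInf A ∈ A := Set.Nonempty.csInf_mem ⟨dist (g 0) x, 0, ht, rfl⟩ hfin
  exact ⟨i, hi, hr.symm⟩

end PrefixDist

section Greedy

variable {X : Type*} [PseudoMetricSpace X] {S : Set X} {n : ℕ} {g : Fin (n + 1) → X}

theorem IsGreedyIn.prefixDist_last_le (hg : IsGreedyIn S g) (hmem : ∀ t, g t ∈ S)
    {t : Fin (n + 1)} (ht : 0 < (t : ℕ)) :
    prefixDist g n (g (Fin.last n)) ≤ prefixDist g t (g t) :=
  (prefixDist_antitone g ht t.is_le _).trans (hg t ht _ (hmem _))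

theorem IsGreedyIn.prefixDist_last_le_dist (hg : IsGreedyIn S g) (hmem : ∀ t, g t ∈ S)
    {a b : Fin (n + 1)} (hab : a ≠ b) :
    prefixDist g n (g (Fin.last n)) ≤ dist (g a) (g b) := by
  rcases hab.lt_or_gt with hlt | hlt
  · exact (hg.prefixDist_last_le hmem (a.zero_le.trans_lt hlt)).trans
      (prefixDist_le_dist g hlt _)
  · rw [dist_comm]
    exact (hg.prefixDist_last_le hmem (b.zero_le.trans_lt hlt)).trans
      (prefixDist_le_dist g hlt _)

theorem IsGreedyIn.exists_castSucc_dist_le (hg : IsGreedyIn S g) (hmem : ∀ t, g t ∈ S)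
    (hn : 0 < n) {x : X} (hx : x ∈ S) :
    ∃ i : Fin n, dist (g i.castSucc) x ≤
      sInf {r : ℝ | ∃ a b : Fin (n + 1), a ≠ b ∧ r = dist (g a) (g b)} := by
  obtain ⟨i, hi, hdist⟩ := exists_dist_eq_prefixDist g hn x
  have hpair : {r : ℝ | ∃ a b : Fin (n + 1), a ≠ b ∧ r = dist (g a) (g b)}.Nonempty :=
    ⟨_, 0, Fin.last n, Fin.ne_of_val_ne (by simpa using hn.ne), rfl⟩
  refine ⟨⟨i, hi⟩, ?_⟩
  calc dist (g i) x = prefixDist g n x := hdist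
    _ ≤ prefixDist g n (g (Fin.last n)) := hg (Fin.last n) hn x hx
    _ ≤ _ := le_csInf hpair fun _ ⟨_, _, hab, hr⟩ => hr ▸ hg.prefixDist_last_le_dist hmem hab

end Greedy

theorem exists_ne_dist_le_two_mul_of_card_lt {X ι : Type*} [PseudoMetricSpace X] [Fintype ι]
    {T : Finset X} {c : ι → X} {r : ℝ} (hcov : ∀ x ∈ T, ∃ i, dist (c i) x ≤ r)
    (hcard : Fintype.card ι < T.card) :
    ∃ x ∈ T, ∃ y ∈ T, x ≠ y ∧ dist x y ≤ 2 * r := by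
  choose f hf using fun x : T => hcov x x.2
  obtain ⟨x, y, hxy, hfxy⟩ := Fintype.exists_ne_map_eq_of_card_lt f (by simpa using hcard)
  refine ⟨x, x.2, y, y.2, Subtype.coe_ne_coe.mpr hxy, ?_⟩
  calc dist (x : X) y ≤ dist (c (f x)) x + dist (c (f y)) y := by
        rw [hfxy]; exact dist_triangle_left _ _ _
    _ ≤ 2 * r := by linarith [hf x, hf y]

theorem gmm_two_approx_general {X : Type*} [MetricSpace X] (S : Finset X) (K : ℕ)
    (hK : 2 ≤ K) (g : Fin K → X)
    (hmem : ∀ t, g t ∈ S)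
    (hgreedy : ∀ t : Fin K, 0 < (t : ℕ) → ∀ j ∈ S,
      sInf {r : ℝ | ∃ i : Fin K, (i : ℕ) < (t : ℕ) ∧ r = dist (g i) j} ≤
        sInf {r : ℝ | ∃ i : Fin K, (i : ℕ) < (t : ℕ) ∧ r = dist (g i) (g t)}) :
    ∀ T ⊆ S, T.card = K →
      sInf {r : ℝ | ∃ i ∈ T, ∃ j ∈ T, i ≠ j ∧ r = dist i j} ≤
        2 * sInf {r : ℝ | ∃ a b : Fin K, a ≠ b ∧ r = dist (g a) (g b)} := by
  intro T hTS hTcard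
  obtain ⟨n, rfl⟩ : ∃ n, K = n + 1 := ⟨K - 1, by omega⟩
  have hg : IsGreedyIn (S : Set X) g := hgreedy
  obtain ⟨x, hx, y, hy, hxy, hdist⟩ := exists_ne_dist_le_two_mul_of_card_lt
    (c := fun i : Fin n => g i.castSucc)
    (fun x hx => hg.exists_castSucc_dist_le hmem (by omega) (hTS hx)) (by simp [hTcard])
  refine le_trans (csInf_le ⟨0, ?_⟩ ⟨x, hx, y, hy, hxy, rfl⟩) hdist
  rintro _ ⟨_, _, _, _, _, rfl⟩
  exact dist_nonneg

/-- GMM (greedy max-min selection) is a 2-approximation for max-min diversification: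
if `g 0, g 1, …` is any greedy sequence in `S` (each `g t` maximizes, over candidates
`j ∈ S`, the minimum distance to the already selected points), then the minimum
pairwise distance of any `K`-element subset `T ⊆ S` is at most twice the minimum
pairwise distance of the greedy selection. -/
theorem gmm_two_approx {X : Type*} [MetricSpace X] (S : Finset X) (K : ℕ)
    (hK : 2 ≤ K) (hKS : K ≤ S.card) (g : Fin K → X)
    (hmem : ∀ t, g t ∈ S) (hinj : Function.Injective g)
    (hgreedy : ∀ t : Fin K, 0 < (t : ℕ) → ∀ j ∈ S,
      sInf {r : ℝ | ∃ i : Fin K, (i : ℕ) < (t : ℕ) ∧ r = dist (g i) j} ≤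
        sInf {r : ℝ | ∃ i : Fin K, (i : ℕ) < (t : ℕ) ∧ r = dist (g i) (g t)}) :
    ∀ T ⊆ S, T.card = K →
      sInf {r : ℝ | ∃ i ∈ T, ∃ j ∈ T, i ≠ j ∧ r = dist i j} ≤
        2 * sInf {r : ℝ | ∃ a b : Fin K, a ≠ b ∧ r = dist (g a) (g b)} :=
  gmm_two_approx_general S K hK g hmem hgreedy
end

section
/- With the safeguard mode active, the greedy filtering procedure returns exactly min(K, S) elements, where S is the size of the initial candidate set: if pruning empties the candidate set before K elements are selected, the safeguard appends previously pruned candidates so that the final output has cardinality min(K, S). -/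
open Classical in
/-- Greedy filtering capped at `K` outputs. -/
noncomputable def greedyFilterK {X : Type*} [MetricSpace X] (ε : ℝ) :
    ℕ → List X → List X
  | 0, _ => []
  | _, [] => []
  | K + 1, k :: rest =>
      k :: greedyFilterK ε K (rest.filter (fun x => !decide (dist k x ^ 2 < ε)))
  termination_by _ l => l.length
  decreasing_by
    simp only [List.length_cons]
    first
      | exact Nat.lt_succ_of_le (List.length_unattach.trans_le ((List.length_filter_le _ _).trans_eq List.length_attach))
      | (simp only [List.length_unattach, List.length_attach]; exact Nat.lt_succ_of_le (List.length_filter_le _ _))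

open Classical in
/-- Greedy filtering with the safeguard: if the filter output falls short of `K`
elements, the output is topped up with remaining (previously pruned) candidates from
the original candidate list. -/
noncomputable def greedyFilterSafe {X : Type*} [MetricSpace X] (ε : ℝ) (K : ℕ)
    (S : List X) : List X :=
  let out := greedyFilterK ε K S
  out ++ (S.filter (fun a => !decide (a ∈ out))).take (K - out.length)

theorem gfK_zero {X : Type*} [MetricSpace X] (ε : ℝ) (S : List X) :
    greedyFilterK ε 0 S = [] := by rw [greedyFilterK]

/-! The greedy output is a sublist of `S` of length at most `K`. As `S` has no duplicates,
exactly `|S| - |out|` candidates are left over for the top-up, so the result has length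
`|out| + min (K - |out|) (|S| - |out|) = min K |S|`. -/

open List

section GreedyFilter

variable {X : Type*} [MetricSpace X] (ε : ℝ)

theorem greedyFilterK_sublist (K : ℕ) (S : List X) : greedyFilterK ε K S <+ S := by
  induction K, S using greedyFilterK.induct (X := X) ε with
  | case1 => simp [greedyFilterK]
  | case2 K hK => cases K <;> simp_all [greedyFilterK]
  | case3 K k rest ih =>
    rw [unattach_filter (hf := fun _ _ => rfl), unattach_attach] at ih
    rw [greedyFilterK]
    exact (ih.trans filter_sublist).cons_cons k

theorem length_greedyFilterK_le (K : ℕ) (S : List X) : (greedyFilterK ε K S).length ≤ K := by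
  induction K, S using greedyFilterK.induct (X := X) ε with
  | case1 => simp [greedyFilterK]
  | case2 K hK => cases K <;> simp_all [greedyFilterK]
  | case3 K k rest ih =>
    rw [unattach_filter (hf := fun _ _ => rfl), unattach_attach] at ih
    rw [greedyFilterK, length_cons]
    exact Nat.succ_le_succ ih

end GreedyFilter

open Classical in
theorem List.Nodup.length_filter_notMem_of_sublist {α : Type*} {l o : List α} (hl : l.Nodup)
    (ho : o <+ l) : (l.filter (fun a => !decide (a ∈ o))).length = l.length - o.length := by
  have hperm : o ++ l.diff o ~ l :=
    subperm_append_diff_self_of_count_le (subperm_ext_iff.mp ho.subperm)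
  rw [← hperm.length_eq, length_append, hl.sdiff_eq_filter]
  simp

theorem greedyFilterSafe_length_general {X : Type*} [MetricSpace X] (ε : ℝ)
    (K : ℕ) (S : List X) (hS : S.Nodup) :
    (greedyFilterSafe ε K S).length = min K S.length := by
  have hsub := greedyFilterK_sublist ε K S
  have hK := length_greedyFilterK_le ε K S
  have hle := hsub.length_le
  simp only [greedyFilterSafe, length_append, length_take,
    hS.length_filter_notMem_of_sublist hsub]
  omega

/-- With the safeguard active, the procedure returns exactly `min (K, |S|)`
elements. -/
theorem greedyFilterSafe_length {X : Type*} [MetricSpace X] (ε : ℝ) (hε : 0 < ε)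
    (K : ℕ) (S : List X) (hS : S.Nodup) :
    (greedyFilterSafe ε K S).length = min K S.length :=
  greedyFilterSafe_length_general ε K S hS
end
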